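/- arXiv:2311.06192 — 7 statements merged into one kernel-verified Lean document; each statement's English description precedes it below -/
import Mathlib

section
/- Let g:[0,1]^n → ℝ be twice continuously differentiable, and let H(w) denote its Hessian at w. Suppose K := max over w ∈ [0,1]^n and i ∈ [n] of |∑_{j≠i} H_{ij}(w)| is finite. Then for every coordinate i, the integrated gradient attribution ∫₀¹ ∂_i g(t·𝟏) dt differs from the marginal gain g(e_i) − g(0) by at most K/2, where e_i is the i-th standard basis vector and 𝟏 is the all-ones vector. -/
/-!
The attribution minus the marginal gain is `∫₀¹ (∂ᵢg(t𝟏) - ∂ᵢg(t eᵢ)) dt`, by the fundamental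
theorem of calculus along `t ↦ t eᵢ`. For fixed `t`, the mean value theorem applied to `∂ᵢg` on the
segment from `t eᵢ` to `t𝟏 = t eᵢ + t ∑_{j ≠ i} eⱼ`, which stays in the cube, writes the integrand as
`t ∑_{j ≠ i} ∂ⱼ∂ᵢg(z)`; by symmetry of the Hessian this is `t` times an off-diagonal row sum, so it
is at most `K t` in absolute value, and `∫₀¹ K t dt = K / 2`.
-/

open Set Finset

section

variable {E : Type*} [NormedAddCommGroup E] [NormedSpace ℝ E] {g : E → ℝ}

theorem ContDiff.continuous_fderiv_smul_apply (hg : ContDiff ℝ 1 g) (c v : E) :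
    Continuous fun t : ℝ => fderiv ℝ g (t • c) v :=
  ((hg.continuous_fderiv one_ne_zero).comp (continuous_id.smul continuous_const)).clm_apply
    continuous_const

theorem ContDiff.sub_eq_integral_fderiv_smul (hg : ContDiff ℝ 1 g) (v : E) :
    g v - g 0 = ∫ t in (0 : ℝ)..1, fderiv ℝ g (t • v) v := by
  have hderiv (t : ℝ) : HasDerivAt (fun t : ℝ => g (t • v)) (fderiv ℝ g (t • v) v) t := by
    have hline : HasDerivAt (fun t : ℝ => t • v) v t := by
      simpa using (hasDerivAt_id t).smul_const v
    exact ((hg.differentiable one_ne_zero) (t • v)).hasFDerivAt.comp_hasDerivAt t hline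
  rw [intervalIntegral.integral_eq_sub_of_hasDerivAt (fun t _ => hderiv t)
    ((hg.continuous_fderiv_smul_apply v v).intervalIntegrable 0 1)]
  simp

theorem ContDiff.fderiv_fderiv_apply_comm (hg : ContDiff ℝ 2 g) (w u v : E) :
    fderiv ℝ (fun x => fderiv ℝ g x v) w u = fderiv ℝ (fun x => fderiv ℝ g x u) w v := by
  have hDg : Differentiable ℝ (fderiv ℝ g) :=
    (hg.fderiv_right (m := 1) le_rfl).differentiable one_ne_zero
  simp only [fderiv_clm_apply (hDg w) (differentiableAt_const _), fderiv_const_apply,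
    ContinuousLinearMap.comp_zero, zero_add, ContinuousLinearMap.flip_apply]
  exact hg.contDiffAt.isSymmSndFDerivAt (by simp) u v

end

section

variable {ι : Type*} [Fintype ι] [DecidableEq ι]

theorem one_sub_single_eq_sum_erase {R : Type*} [Ring R] (i : ι) :
    (1 : ι → R) - Pi.single i 1 = ∑ j ∈ univ.erase i, Pi.single j 1 := by
  rw [sub_eq_iff_eq_add, Finset.sum_erase_add _ _ (mem_univ i)]
  exact (Finset.univ_sum_single 1).symm

theorem abs_fderiv_smul_one_sub_fderiv_smul_single_le {g : (ι → ℝ) → ℝ} (hg : ContDiff ℝ 2 g)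
    {K : ℝ} (i : ι)
    (hK : ∀ w ∈ Icc (0 : ι → ℝ) 1, |∑ j ∈ univ.erase i,
      fderiv ℝ (fun x => fderiv ℝ g x (Pi.single j 1)) w (Pi.single i 1)| ≤ K)
    {t : ℝ} (ht : t ∈ Icc (0 : ℝ) 1) :
    |fderiv ℝ g (t • 1) (Pi.single i 1) - fderiv ℝ g (t • Pi.single i 1) (Pi.single i 1)|
      ≤ K * t := by
  set e : ι → ℝ := Pi.single i 1
  have hcube : ∀ x ∈ Icc (0 : ι → ℝ) 1, t • x ∈ Icc (0 : ι → ℝ) 1 := fun x hx =>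
    (convex_Icc _ _).smul_mem_of_zero_mem (left_mem_Icc.2 zero_le_one) hx ht
  have he : e ∈ Icc (0 : ι → ℝ) 1 := by
    constructor <;> intro k <;> by_cases h : k = i <;> simp [e, h]
  have hpartial : Differentiable ℝ fun x => fderiv ℝ g x e :=
    ((hg.fderiv_right (m := 1) le_rfl).differentiable one_ne_zero).clm_apply
      (differentiable_const e)
  obtain ⟨z, hz, hmvt⟩ := domain_mvt (s := univ) (x := t • e) (y := t • 1)
    (fun x _ => (hpartial x).hasFDerivAt.hasFDerivWithinAt) convex_univ trivial trivial
  have hz_cube : z ∈ Icc (0 : ι → ℝ) 1 :=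
    (convex_Icc _ _).segment_subset (hcube e he) (hcube 1 (right_mem_Icc.2 zero_le_one)) hz
  rw [hmvt, ← smul_sub, one_sub_single_eq_sum_erase, map_smul, map_sum, smul_eq_mul, abs_mul,
    abs_of_nonneg ht.1, mul_comm]
  simp_rw [hg.fderiv_fderiv_apply_comm z _ e]
  exact mul_le_mul_of_nonneg_right (hK z hz_cube) ht.1

end

/-- PIG vs marginal gain: the integrated gradient attribution of feature `i`
differs from the marginal gain `g(e_i) - g(0)` by at most `K/2`, where `K`
bounds the off-diagonal Hessian row sums on the cube `[0,1]^n`. -/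
theorem stmt_0 {n : ℕ} (g : (Fin n → ℝ) → ℝ) (hg : ContDiff ℝ 2 g)
    (H : (Fin n → ℝ) → Fin n → Fin n → ℝ)
    (hH : ∀ w i j, H w i j =
      fderiv ℝ (fun x => fderiv ℝ g x (Pi.single j 1)) w (Pi.single i 1))
    (K : ℝ)
    (hK : ∀ w ∈ Set.Icc (0 : Fin n → ℝ) 1, ∀ i : Fin n,
      |∑ j ∈ Finset.univ.erase i, H w i j| ≤ K)
    (i : Fin n) :
    |(∫ t in (0:ℝ)..1, fderiv ℝ g (fun _ => t) (Pi.single i 1)) -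
      (g (Pi.single i 1) - g 0)| ≤ K / 2 := by
  simp only [hH] at hK
  have hg1 : ContDiff ℝ 1 g := hg.of_le (by norm_num)
  have hdiag (t : ℝ) : (fun _ : Fin n => t) = t • 1 := by ext; simp
  simp only [hdiag]
  rw [hg1.sub_eq_integral_fderiv_smul, ← intervalIntegral.integral_sub
    ((hg1.continuous_fderiv_smul_apply _ _).intervalIntegrable 0 1)
    ((hg1.continuous_fderiv_smul_apply _ _).intervalIntegrable 0 1), ← Real.norm_eq_abs]
  calc _ ≤ ∫ t in (0 : ℝ)..1, K * t :=
        intervalIntegral.norm_integral_le_of_norm_le zero_le_one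
          (Filter.Eventually.of_forall fun t ht =>
            abs_fderiv_smul_one_sub_fderiv_smul_single_le hg i (fun w hw => hK w hw i)
              (Ioc_subset_Icc_self ht))
          ((continuous_const.mul continuous_id).intervalIntegrable 0 1)
    _ = K / 2 := by
        rw [intervalIntegral.integral_const_mul, integral_id]
        ring
end

section
/- Let g:[0,1]^n → ℝ be twice continuously differentiable with Hessian that is diagonal at every point (i.e., H_{ij}(w) = 0 for all i ≠ j and all w ∈ [0,1]^n). Then for each i, the integrated gradient attribution ∫₀¹ ∂_i g(t·𝟏) dt equals the marginal gain g(e_i) − g(0). -/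
/-!
Write `D := ∂ᵢ g`. For `t ∈ [0,1]` the segment from `t • eᵢ` to `t • 𝟏` stays in the unit
cube and moves only the coordinates `j ≠ i`, along which `D` has derivative `∂ⱼ∂ᵢ g = 0`;
hence `D (t • 𝟏) = D (t • eᵢ)`. The integrated gradient is therefore `∫₀¹ ∂ᵢ g (t • eᵢ) dt`,
which is `g eᵢ - g 0` by the fundamental theorem of calculus along the `i`-th axis.
-/

open Set intervalIntegral

theorem LinearMap.apply_eq_zero_of_apply_single_eq_zero {ι R M : Type*} [Fintype ι]
    [DecidableEq ι] [CommSemiring R] [AddCommMonoid M] [Module R M] (L : (ι → R) →ₗ[R] M)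
    {v : ι → R} (h : ∀ j, v j ≠ 0 → L (Pi.single j 1) = 0) : L v = 0 := by
  rw [pi_eq_sum_univ' v, map_sum]
  refine Finset.sum_eq_zero fun j _ => ?_
  by_cases hj : v j = 0
  · simp [hj]
  · simp [h j hj]

section Segment

variable {E F : Type*} [NormedAddCommGroup E] [NormedSpace ℝ E]
  [NormedAddCommGroup F] [NormedSpace ℝ F] [CompleteSpace F]

theorem integral_fderiv_add_smul_apply {f : E → F} (hf : ContDiff ℝ 1 f) (x v : E) :
    ∫ t in (0 : ℝ)..1, fderiv ℝ f (x + t • v) v = f (x + v) - f x := by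
  have hderiv : ∀ t : ℝ, HasDerivAt (fun t => f (x + t • v)) (fderiv ℝ f (x + t • v) v) t :=
    fun t => ((hf.differentiable one_ne_zero _).hasFDerivAt).comp_hasDerivAt t
      (((hasDerivAt_id t).smul_const v).const_add x |>.congr_deriv (one_smul ℝ v))
  have hcont : Continuous fun t : ℝ => fderiv ℝ f (x + t • v) v :=
    ((hf.continuous_fderiv one_ne_zero).comp (by fun_prop)).clm_apply continuous_const
  simpa using
    integral_eq_sub_of_hasDerivAt (fun t _ => hderiv t) (hcont.intervalIntegrable 0 1)

theorem eq_of_fderiv_apply_eq_zero_on_segment {f : E → F} (hf : ContDiff ℝ 1 f) {x v : E}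
    (h : ∀ s ∈ Icc (0 : ℝ) 1, fderiv ℝ f (x + s • v) v = 0) : f (x + v) = f x := by
  rw [← sub_eq_zero, ← integral_fderiv_add_smul_apply hf]
  refine (integral_congr fun s hs => ?_).trans integral_zero
  exact h s (uIcc_of_le (zero_le_one' ℝ) ▸ hs)

end Segment

theorem fderiv_const_apply_single_eq_fderiv_smul_single {n : ℕ} {g : (Fin n → ℝ) → ℝ}
    (hg : ContDiff ℝ 2 g)
    (hdiag : ∀ w ∈ Icc (0 : Fin n → ℝ) 1, ∀ i j : Fin n, i ≠ j →
      fderiv ℝ (fun x => fderiv ℝ g x (Pi.single j 1)) w (Pi.single i 1) = 0)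
    (i : Fin n) {t : ℝ} (ht : t ∈ Icc (0 : ℝ) 1) :
    fderiv ℝ g (fun _ => t) (Pi.single i 1) = fderiv ℝ g (t • Pi.single i 1) (Pi.single i 1) := by
  set e : Fin n → ℝ := Pi.single i 1
  set v : Fin n → ℝ := fun j => if j = i then 0 else t
  have hv : t • e + v = fun _ => t := by
    ext j
    by_cases hj : j = i <;> simp [e, v, hj]
  have hcube : t • e ∈ Icc (0 : Fin n → ℝ) 1 ∧ t • e + v ∈ Icc (0 : Fin n → ℝ) 1 := by
    rw [hv]
    refine ⟨⟨fun j => ?_, fun j => ?_⟩, ⟨fun _ => ht.1, fun _ => ht.2⟩⟩ <;>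
      by_cases hj : j = i <;> simp [e, hj, ht.1, ht.2]
  have hD : ContDiff ℝ 1 fun x => fderiv ℝ g x e :=
    (hg.fderiv_right one_add_one_eq_two.le).clm_apply contDiff_const
  rw [← hv]
  refine eq_of_fderiv_apply_eq_zero_on_segment hD fun s hs => ?_
  refine LinearMap.apply_eq_zero_of_apply_single_eq_zero
    (fderiv ℝ (fun x => fderiv ℝ g x e) (t • e + s • v)).toLinearMap fun j hj => ?_
  have hji : j ≠ i := by rintro rfl; simp [v] at hj
  exact hdiag _ ((convex_Icc _ _).add_smul_mem hcube.1 hcube.2 hs) j i hji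

/-- If the Hessian of `g` is diagonal at every point of `[0,1]^n`, then the
integrated gradient attribution of each feature equals its marginal gain. -/
theorem stmt_1 {n : ℕ} (g : (Fin n → ℝ) → ℝ) (hg : ContDiff ℝ 2 g)
    (hdiag : ∀ w ∈ Set.Icc (0 : Fin n → ℝ) 1, ∀ i j : Fin n, i ≠ j →
      fderiv ℝ (fun x => fderiv ℝ g x (Pi.single j 1)) w (Pi.single i 1) = 0)
    (i : Fin n) :
    (∫ t in (0:ℝ)..1, fderiv ℝ g (fun _ => t) (Pi.single i 1)) =
      g (Pi.single i 1) - g 0 := by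
  calc (∫ t in (0:ℝ)..1, fderiv ℝ g (fun _ => t) (Pi.single i 1))
      = ∫ t in (0:ℝ)..1, fderiv ℝ g (0 + t • Pi.single i 1) (Pi.single i 1) :=
        integral_congr fun t ht => by
          rw [zero_add]
          exact fderiv_const_apply_single_eq_fderiv_smul_single hg hdiag i
            (uIcc_of_le (zero_le_one' ℝ) ▸ ht)
    _ = g (Pi.single i 1) - g 0 := by
        simpa using integral_fderiv_add_smul_apply (hg.of_le one_le_two) 0 (Pi.single i 1)
end

section
/- With the setup of the linear regression attribution lemma (x a least-squares solution, g(w) = −‖A(x⊙w) − b‖²), for every t ∈ [0,1] one has ∇g(t·𝟏) = 2(1−t)·diag(x)·Aᵀb. -/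
open scoped BigOperators

/-- Gradient of the linear-regression objective along the diagonal path:
with `x` a least-squares solution and `g(w) = -‖A(x⊙w) - b‖²`, one has
`∇g(t·𝟏) = 2(1-t)·diag(x)·Aᵀb`. -/
theorem stmt_5 {m n : ℕ} (A : Matrix (Fin m) (Fin n) ℝ) (b : Fin m → ℝ)
    (x : Fin n → ℝ)
    (hx : A.transpose.mulVec (A.mulVec x) = A.transpose.mulVec b)
    (g : (Fin n → ℝ) → ℝ)
    (hg : ∀ w, g w = -∑ j : Fin m, ((A.mulVec (fun i => x i * w i) - b) j)^2) :
    ∀ t ∈ Set.Icc (0:ℝ) 1, ∀ i : Fin n,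
      fderiv ℝ g (fun _ => t) (Pi.single i 1) =
        2 * (1 - t) * (x i * A.transpose.mulVec b i) := by
  intro t ht i
  have hgfun : g = fun w => -∑ j : Fin m, ((A.mulVec (fun i => x i * w i) - b) j)^2 :=
    funext hg
  subst hgfun
  set w0 : Fin n → ℝ := fun _ => t with hw0
  set φ : Fin m → ((Fin n → ℝ) →L[ℝ] ℝ) :=
    fun j => ∑ k, (A j k * x k) • (ContinuousLinearMap.proj k : (Fin n → ℝ) →L[ℝ] ℝ) with hφ
  have hφapp : ∀ j w, φ j w = ∑ k, A j k * x k * w k := by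
    intro j w
    simp [hφ, ContinuousLinearMap.sum_apply]
  have hmv : ∀ j w, (A.mulVec (fun k => x k * w k) - b) j = φ j w - b j := by
    intro j w
    simp only [Pi.sub_apply, Matrix.mulVec, dotProduct, hφapp]
    congr 1
    exact Finset.sum_congr rfl fun k _ => by ring
  have hderiv : HasFDerivAt
      (fun w => -∑ j : Fin m, ((A.mulVec (fun i => x i * w i) - b) j)^2)
      (-∑ j : Fin m, ((φ j w0 - b j) • φ j + (φ j w0 - b j) • φ j)) w0 := by
    have heq : (fun w => -∑ j : Fin m, ((A.mulVec (fun i => x i * w i) - b) j)^2)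
        = fun w => -∑ j : Fin m, (φ j w - b j) * (φ j w - b j) := by
      funext w
      simp only [hmv, sq]
    rw [heq]
    exact (HasFDerivAt.fun_sum (fun j _ =>
      (((φ j).hasFDerivAt.sub_const (b j)).mul ((φ j).hasFDerivAt.sub_const (b j))))).neg
  rw [hderiv.fderiv]
  have hproj : ∀ j, φ j (Pi.single i 1) = A j i * x i := by
    intro j
    rw [hφapp]
    rw [Finset.sum_eq_single i]
    · simp
    · intro k _ hk; simp [Pi.single_apply, hk]
    · simp
  have hφw0 : ∀ j, φ j w0 = t * A.mulVec x j := by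
    intro j
    rw [hφapp]
    simp only [Matrix.mulVec, dotProduct, hw0, Finset.mul_sum]
    exact Finset.sum_congr rfl fun k _ => by ring
  have key : ∑ j, A j i * (A.mulVec x j) = ∑ j, A j i * b j := by
    have h := congrFun hx i
    simpa [Matrix.mulVec, dotProduct, Matrix.transpose_apply] using h
  have hrhs : A.transpose.mulVec b i = ∑ j, A j i * b j := by
    simp [Matrix.mulVec, dotProduct, Matrix.transpose_apply]
  simp only [ContinuousLinearMap.neg_apply, ContinuousLinearMap.sum_apply,
    ContinuousLinearMap.add_apply, ContinuousLinearMap.smul_apply, smul_eq_mul,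
    hproj, hφw0, hrhs]
  have expand : ∑ j : Fin m,
      ((t * A.mulVec x j - b j) * (A j i * x i) + (t * A.mulVec x j - b j) * (A j i * x i))
      = 2 * x i * t * (∑ j, A j i * (A.mulVec x j)) - 2 * x i * (∑ j, A j i * b j) := by
    rw [Finset.mul_sum, Finset.mul_sum, ← Finset.sum_sub_distrib]
    exact Finset.sum_congr rfl fun j _ => by ring
  rw [expand, key]
  ring
end

section
/- Let g:[0,1]^n → ℝ and suppose features 1,…,t are redundant: there exists h:[0,1]^{n−t+1} → ℝ such that g(w₁,…,w_n) = h(max{w₁,…,w_t}, w_{t+1},…,w_n) for all w ∈ [0,1]^n, with h differentiable. Then the integrated gradient attributions with baseline 0 assign equal scores to features 1 through t: ∫₀¹ ∂_i g(t·𝟏) dt is the same value for every i ∈ {1,…,t}. -/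
/-- Feature redundancy: if the first `t` features of `g` are redundant, i.e.
`g(w) = h(max{w₁,…,w_t}, w_{t+1},…,w_n)` for some `h`, then integrated
gradients with baseline `0` assigns equal attribution to features `1,…,t`. -/
theorem stmt_6 {n : ℕ} (t : ℕ) (ht : 1 ≤ t) (htn : t ≤ n)
    (g : (Fin n → ℝ) → ℝ)
    (hne : (Finset.univ.filter fun k : Fin n => (k : ℕ) < t).Nonempty)
    (h : ℝ → (Fin n → ℝ) → ℝ)
    (hh : Differentiable ℝ fun p : ℝ × (Fin n → ℝ) => h p.1 p.2)
    (hgh : ∀ w : Fin n → ℝ,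
      g w = h ((Finset.univ.filter fun k : Fin n => (k : ℕ) < t).sup' hne w)
              (fun k => if (k : ℕ) < t then 0 else w k))
    (i j : Fin n) (hi : (i : ℕ) < t) (hj : (j : ℕ) < t) :
    (∫ s in (0:ℝ)..1, fderiv ℝ g (fun _ => s) (Pi.single i 1)) =
      ∫ s in (0:ℝ)..1, fderiv ℝ g (fun _ => s) (Pi.single j 1) := by
  -- the swap preserves the predicate `k < t`
  have hpred : ∀ k : Fin n, ((Equiv.swap i j k : ℕ) < t ↔ (k : ℕ) < t) := by
    intro k
    rcases eq_or_ne k i with rfl | hki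
    · simp [Equiv.swap_apply_left, hi, hj]
    rcases eq_or_ne k j with rfl | hkj
    · simp [Equiv.swap_apply_right, hi, hj]
    · rw [Equiv.swap_apply_of_ne_of_ne hki hkj]
  -- the continuous linear equiv `w ↦ w ∘ σ`
  let e : (Fin n → ℝ) ≃L[ℝ] (Fin n → ℝ) :=
    (LinearEquiv.funCongrLeft ℝ ℝ (Equiv.swap i j)).toContinuousLinearEquiv
  have heapp : ∀ (w : Fin n → ℝ) (k : Fin n), e w k = w (Equiv.swap i j k) := by
    intro w k; rfl
  -- g is invariant under the swap
  have hginv : g ∘ e = g := by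
    funext w
    rw [Function.comp_apply, hgh, hgh]
    have hsup : (Finset.univ.filter fun k : Fin n => (k : ℕ) < t).sup' hne (e w) =
        (Finset.univ.filter fun k : Fin n => (k : ℕ) < t).sup' hne w := by
      apply le_antisymm
      · apply Finset.sup'_le
        intro k hk
        rw [heapp]
        refine Finset.le_sup' w ?_
        simp only [Finset.mem_filter, Finset.mem_univ, true_and] at hk ⊢
        exact (hpred k).2 hk
      · apply Finset.sup'_le
        intro k hk
        simp only [Finset.mem_filter, Finset.mem_univ, true_and] at hk
        have hw : w k = e w (Equiv.swap i j k) := by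
          rw [heapp, Equiv.swap_apply_self]
        rw [hw]
        refine Finset.le_sup' (e w) ?_
        simp only [Finset.mem_filter, Finset.mem_univ, true_and]
        exact (hpred k).2 hk
    have hmask : (fun k : Fin n => if (k : ℕ) < t then 0 else e w k) =
        (fun k : Fin n => if (k : ℕ) < t then 0 else w k) := by
      funext k
      by_cases hk : (k : ℕ) < t
      · simp [hk]
      · have hki : k ≠ i := fun hh' => hk (hh' ▸ hi)
        have hkj : k ≠ j := fun hh' => hk (hh' ▸ hj)
        simp only [hk, if_false, heapp, Equiv.swap_apply_of_ne_of_ne hki hkj]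
    rw [hsup, hmask]
  -- the diagonal point is fixed
  have hdiag : ∀ s : ℝ, e (fun _ => s) = (fun _ => s) := by
    intro s; funext k; rw [heapp]
  -- e maps single j 1 to single i 1
  have hsingle : e (Pi.single j 1) = Pi.single i 1 := by
    funext k
    rw [heapp]
    rcases eq_or_ne k i with rfl | hki
    · rw [Equiv.swap_apply_left]
      simp
    rcases eq_or_ne k j with rfl | hkj
    · rw [Equiv.swap_apply_right]
      simp [Pi.single_apply, hki, fun hh' : i = k => hki hh'.symm]
    · rw [Equiv.swap_apply_of_ne_of_ne hki hkj]
      simp [Pi.single_apply, hki, hkj]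
  -- pointwise equality of the integrands
  apply intervalIntegral.integral_congr
  intro s _
  have key : fderiv ℝ (g ∘ e) (fun _ => s) =
      (fderiv ℝ g (e fun _ => s)).comp (e : (Fin n → ℝ) →L[ℝ] (Fin n → ℝ)) :=
    e.comp_right_fderiv
  have := congrArg (fun L : (Fin n → ℝ) →L[ℝ] ℝ => L (Pi.single j 1)) key
  simp only [hginv, hdiag, ContinuousLinearMap.comp_apply,
    ContinuousLinearEquiv.coe_coe, hsingle] at this
  exact this.symm
end

section
/- Let g:[0,1]^n → ℝ be invariant under any permutation of its first t coordinates and continuously differentiable. Then ∫₀¹ ∂_i g(s·𝟏) ds = ∫₀¹ ∂_j g(s·𝟏) ds for all i, j ∈ {1,…,t}. -/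
/-! The transposition of coordinates `i` and `j` is a linear automorphism of `ℝⁿ` fixing `g` and
every diagonal point `s • 𝟏`, and it exchanges the basis vectors `eᵢ` and `eⱼ`. Differentiating
`g ∘ swap = g` at `s • 𝟏` gives `∂ᵢ g (s • 𝟏) = ∂ⱼ g (s • 𝟏)` for every `s`, so the two integrands
agree pointwise. -/

theorem fderiv_apply_eq_of_comp_perm_eq {𝕜 ι F : Type*} [NontriviallyNormedField 𝕜] [Fintype ι]
    [NormedAddCommGroup F] [NormedSpace 𝕜 F] {f : (ι → 𝕜) → F} (σ : Equiv.Perm ι)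
    (hf : ∀ w, f (w ∘ σ) = f w) (x v : ι → 𝕜) :
    fderiv 𝕜 f x v = fderiv 𝕜 f (x ∘ σ) (v ∘ σ) := by
  set L := ContinuousLinearEquiv.piCongrLeft 𝕜 (fun _ : ι => 𝕜) σ.symm
  have hL : ∀ w, L w = w ∘ σ := fun w => by
    ext k
    simp [L, ContinuousLinearEquiv.piCongrLeft, Equiv.piCongrLeft_apply_eq_cast]
  have hfL : f ∘ L = f := funext fun w => by simp [hL, hf]
  calc fderiv 𝕜 f x v = fderiv 𝕜 (f ∘ L) x v := by rw [hfL]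
    _ = fderiv 𝕜 f (L x) (L v) := by rw [L.comp_right_fderiv]; rfl
    _ = fderiv 𝕜 f (x ∘ σ) (v ∘ σ) := by rw [hL, hL]

theorem fderiv_const_single_eq_of_comp_swap_eq {𝕜 ι F : Type*} [NontriviallyNormedField 𝕜]
    [Fintype ι] [DecidableEq ι] [NormedAddCommGroup F] [NormedSpace 𝕜 F] {f : (ι → 𝕜) → F}
    {i j : ι} (hf : ∀ w, f (w ∘ Equiv.swap i j) = f w) (c a : 𝕜) :
    fderiv 𝕜 f (fun _ => c) (Pi.single i a) = fderiv 𝕜 f (fun _ => c) (Pi.single j a) := by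
  rw [fderiv_apply_eq_of_comp_perm_eq _ hf, Pi.single_comp_equiv, Equiv.symm_swap,
    Equiv.swap_apply_left]
  rfl

theorem stmt_7_general {n : ℕ} (t : ℕ) (g : (Fin n → ℝ) → ℝ)
    (hsym : ∀ σ : Equiv.Perm (Fin n), (∀ k : Fin n, t ≤ (k : ℕ) → σ k = k) →
      ∀ w : Fin n → ℝ, g (w ∘ σ) = g w)
    (i j : Fin n) (hi : (i : ℕ) < t) (hj : (j : ℕ) < t) :
    (∫ s in (0:ℝ)..1, fderiv ℝ g (fun _ => s) (Pi.single i 1)) =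
      ∫ s in (0:ℝ)..1, fderiv ℝ g (fun _ => s) (Pi.single j 1) := by
  have hswap : ∀ w : Fin n → ℝ, g (w ∘ Equiv.swap i j) = g w :=
    hsym _ fun k hk => Equiv.swap_apply_of_ne_of_ne (by rintro rfl; omega) (by rintro rfl; omega)
  simp only [fderiv_const_single_eq_of_comp_swap_eq hswap]

/-- Symmetry of integrated gradients: if `g` is invariant under every
permutation of its first `t` coordinates, then the integrated gradient
attributions of the first `t` coordinates along the diagonal path are equal. -/
theorem stmt_7 {n : ℕ} (t : ℕ) (g : (Fin n → ℝ) → ℝ) (hg : ContDiff ℝ 1 g)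
    (hsym : ∀ σ : Equiv.Perm (Fin n), (∀ k : Fin n, t ≤ (k : ℕ) → σ k = k) →
      ∀ w : Fin n → ℝ, g (w ∘ σ) = g w)
    (i j : Fin n) (hi : (i : ℕ) < t) (hj : (j : ℕ) < t) :
    (∫ s in (0:ℝ)..1, fderiv ℝ g (fun _ => s) (Pi.single i 1)) =
      ∫ s in (0:ℝ)..1, fderiv ℝ g (fun _ => s) (Pi.single j 1) :=
  stmt_7_general t g hsym i j hi hj
end

section
/- An optimal ordering exists for greedy-consistent functions: if G:2^{[n]} → ℝ is monotone and submodular with G(∅) = 0, and the permutation r is produced by the greedy algorithm (r_j maximizes the marginal gain given {r₁,…,r_{j−1}}), then for every k, G({r₁,…,r_k}) ≥ (1 − 1/e) · max_{|S| = k} G(S). -/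
/-!
Let `A i` be the first `i` greedy picks and `S` any `k`-set. By monotonicity and submodularity,
`G S - G (A i) ≤ G (S ∪ A i) - G (A i)` is at most the sum over `x ∈ S` of the marginal gains at
`A i`, each of which is at most the greedy gain `G (A (i+1)) - G (A i)`. So the gap
`G S - G (A i)` shrinks by a factor `1 - 1/k` at every step, and after `k` steps it is at most
`(1 - 1/k)^k G S ≤ e⁻¹ G S`.
-/

open Finset

theorem le_one_sub_div_pow_mul_of_le_mul_sub {d : ℕ → ℝ} {k m : ℕ} (hk : 0 < k)
    (h : ∀ i < m, d i ≤ k * (d i - d (i + 1))) :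
    d m ≤ (1 - 1 / k) ^ m * d 0 := by
  have hk' : (1 : ℝ) ≤ k := by exact_mod_cast hk
  have hq : 0 ≤ 1 - 1 / (k : ℝ) := sub_nonneg.2 ((div_le_one (by positivity)).2 hk')
  induction m with
  | zero => simp
  | succ m ih =>
    have hdrop : d m / k ≤ d m - d (m + 1) := by
      rw [div_le_iff₀ (by positivity)]
      linarith [h m m.lt_succ_self]
    have hdecay : d (m + 1) ≤ (1 - 1 / k) * d m :=
      calc d (m + 1) ≤ d m - d m / k := by linarith
        _ = (1 - 1 / k) * d m := by ring
    calc d (m + 1) ≤ (1 - 1 / k) * d m := hdecay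
      _ ≤ (1 - 1 / k) * ((1 - 1 / k) ^ m * d 0) :=
        mul_le_mul_of_nonneg_left (ih fun i hi => h i (hi.trans m.lt_succ_self)) hq
      _ = (1 - 1 / k) ^ (m + 1) * d 0 := by ring

def Submodular {α : Type*} [DecidableEq α] (G : Finset α → ℝ) : Prop :=
  ∀ S T : Finset α, S ⊆ T → ∀ x ∉ T, G (insert x T) - G T ≤ G (insert x S) - G S

namespace Submodular

variable {α : Type*} [DecidableEq α] {G : Finset α → ℝ}

theorem sub_le_sum_marginal (hmono : Monotone G) (hsub : Submodular G) (B S : Finset α) :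
    G (S ∪ B) - G B ≤ ∑ x ∈ S, (G (insert x B) - G B) := by
  induction S using Finset.induction_on with
  | empty => simp
  | @insert a s ha ih =>
    have hstep : G (insert a (s ∪ B)) - G (s ∪ B) ≤ G (insert a B) - G B := by
      by_cases hab : a ∈ s ∪ B
      · rw [insert_eq_self.2 hab, sub_self, sub_nonneg]
        exact hmono (subset_insert _ _)
      · exact hsub B (s ∪ B) subset_union_right a hab
    rw [insert_union, sum_insert ha]
    linarith

theorem sub_le_card_mul (hmono : Monotone G) (hsub : Submodular G) {B : Finset α} {g : ℝ}
    (hg : ∀ x, G (insert x B) - G B ≤ g) (S : Finset α) :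
    G S - G B ≤ #S * g :=
  calc G S - G B ≤ G (S ∪ B) - G B := by gcongr; exact hmono subset_union_left
    _ ≤ ∑ x ∈ S, (G (insert x B) - G B) := sub_le_sum_marginal hmono hsub B S
    _ ≤ ∑ _x ∈ S, g := sum_le_sum fun x _ => hg x
    _ = #S * g := by rw [sum_const, nsmul_eq_mul]

theorem one_sub_exp_inv_mul_le_of_greedy (hmono : Monotone G) (hsub : Submodular G)
    (h0 : G ∅ = 0) {A : ℕ → Finset α} (hA0 : A 0 = ∅) {k : ℕ}
    (hgreedy : ∀ i < k, ∀ x, G (insert x (A i)) - G (A i) ≤ G (A (i + 1)) - G (A i))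
    {S : Finset α} (hS : #S = k) :
    (1 - (Real.exp 1)⁻¹) * G S ≤ G (A k) := by
  rcases Nat.eq_zero_or_pos k with rfl | hk
  · rw [card_eq_zero.1 hS, hA0, h0, mul_zero]
  have hGS : 0 ≤ G S := h0 ▸ hmono (empty_subset S)
  have hgap : G S - G (A k) ≤ (1 - 1 / k) ^ k * (G S - G (A 0)) :=
    le_one_sub_div_pow_mul_of_le_mul_sub (d := fun i => G S - G (A i)) hk fun i hi => by
      simpa [hS] using sub_le_card_mul hmono hsub (hgreedy i hi) S
  have hexp : (1 - 1 / k : ℝ) ^ k ≤ (Real.exp 1)⁻¹ := by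
    rw [← Real.exp_neg]
    exact Real.one_sub_div_pow_le_exp_neg (by exact_mod_cast hk)
  rw [hA0, h0, sub_zero] at hgap
  have := mul_le_mul_of_nonneg_right hexp hGS
  linarith

end Submodular

def prefixImage {α : Type*} [DecidableEq α] {n : ℕ} (r : Fin n → α) (k : ℕ) : Finset α :=
  (univ.filter fun j : Fin n => (j : ℕ) < k).image r

section prefixImage

variable {α : Type*} [DecidableEq α] {n : ℕ} (r : Fin n → α)

theorem prefixImage_zero : prefixImage r 0 = ∅ := by
  simp [prefixImage]

theorem prefixImage_succ {i : ℕ} (hi : i < n) :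
    prefixImage r (i + 1) = insert (r ⟨i, hi⟩) (prefixImage r i) := by
  have hfilter : (univ.filter fun j : Fin n => (j : ℕ) < i + 1)
      = insert ⟨i, hi⟩ (univ.filter fun j : Fin n => (j : ℕ) < i) := by
    ext j
    simp only [mem_filter, mem_univ, true_and, mem_insert, Fin.ext_iff]
    omega
  rw [prefixImage, hfilter, image_insert, prefixImage]

end prefixImage

/-- Nemhauser–Wolsey–Fisher guarantee: if `G` is monotone and submodular with
`G(∅) = 0` and the permutation `r` is produced by the greedy algorithm, then
for every `k`, the first `k` greedy selections achieve at least a `(1 - 1/e)`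
fraction of the optimum over all size-`k` subsets. -/
theorem stmt_14 {n : ℕ} (G : Finset (Fin n) → ℝ)
    (hmono : ∀ S T : Finset (Fin n), S ⊆ T → G S ≤ G T)
    (hsub : ∀ S T : Finset (Fin n), S ⊆ T → ∀ x ∉ T,
      G (insert x S) - G S ≥ G (insert x T) - G T)
    (h0 : G ∅ = 0) (r : Equiv.Perm (Fin n))
    (hgreedy : ∀ j : Fin n, ∀ x : Fin n,
      G (insert (r j) ((Finset.univ.filter fun j' : Fin n => j' < j).image r)) -
          G ((Finset.univ.filter fun j' : Fin n => j' < j).image r) ≥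
        G (insert x ((Finset.univ.filter fun j' : Fin n => j' < j).image r)) -
          G ((Finset.univ.filter fun j' : Fin n => j' < j).image r)) :
    ∀ k : ℕ, k ≤ n → ∀ S : Finset (Fin n), S.card = k →
      G ((Finset.univ.filter fun j : Fin n => (j : ℕ) < k).image r) ≥
        (1 - (Real.exp 1)⁻¹) * G S := by
  intro k hk S hS
  refine Submodular.one_sub_exp_inv_mul_le_of_greedy (A := prefixImage r)
    (fun S T hST => hmono S T hST) hsub h0 (prefixImage_zero r) (fun i hi x => ?_) hS
  have hin : i < n := hi.trans_le hk
  rw [prefixImage_succ r hin]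
  -- `j' < ⟨i, hin⟩` on `Fin n` unfolds to `(j' : ℕ) < i`, so `hgreedy` is about `prefixImage r i`.
  exact hgreedy ⟨i, hin⟩ x
end

section
/- For a linear model through a softmax-free score, replicating a feature splits its integrated gradient attribution: let g(w) = a₁·max{w₁, …, w_t} + ∑_{j>t} a_j w_j on [0,1]^n with a₁ > 0. Then integrated gradients with baseline 0 and input 𝟏 assigns each of the first t coordinates attribution a₁/t, while each coordinate j > t receives a_j. In particular, if a₁/t < a_j < a₁ for some j > t, the redundant copies of the strongest feature are each out-ranked or the top-k selection can be manipulated by choosing t. -/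
/-!
Along each integration path the score is affine in the varied parameter: on the diagonal of
the first `t` coordinates the max term is just that parameter, and along the `j`-th axis the max
term is frozen. So each path derivative is a constant slope (`a₁`, resp. `a_j`), and the
integrated gradient over `[0, 1]` is that slope; the symmetric convention divides `a₁` by `t`.
-/

open Finset

theorem intervalIntegral_deriv_of_affine {f : ℝ → ℝ → ℝ} {c : ℝ} {d : ℝ → ℝ}
    (hf : ∀ s u, f s u = c * u + d s) (a b : ℝ) :
    ∫ s in a..b, deriv (f s) s = (b - a) * c := by
  have hderiv : ∀ s, deriv (f s) s = c := fun s => by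
    rw [show f s = fun u => c * u + d s from funext (hf s)]
    simp
  simp [hderiv]

section MaxPlusLinear

variable {ι : Type*} (S : Finset ι) (hS : S.Nonempty) (T : Finset ι) (a₁ : ℝ) (a : ι → ℝ)

def maxPlusLinear (w : ι → ℝ) : ℝ :=
  a₁ * S.sup' hS w + ∑ j ∈ T, a j * w j

variable {S T}

theorem maxPlusLinear_of_eqOn {w : ι → ℝ} {u s : ℝ} (hwS : ∀ i ∈ S, w i = u)
    (hwT : ∀ j ∈ T, w j = s) :
    maxPlusLinear S hS T a₁ a w = a₁ * u + (∑ j ∈ T, a j) * s := by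
  rw [maxPlusLinear, sup'_eq_of_forall hS w hwS, sum_mul,
    sum_congr rfl fun j hj => by rw [hwT j hj]]

theorem maxPlusLinear_update_const [DecidableEq ι] {j : ι} (hjS : j ∉ S) (hjT : j ∈ T)
    (s u : ℝ) :
    maxPlusLinear S hS T a₁ a (Function.update (fun _ => s) j u) =
      a j * u + (a₁ * s + ∑ k ∈ T.erase j, a k * s) := by
  have hmax : S.sup' hS (Function.update (fun _ => s) j u) = s :=
    sup'_eq_of_forall hS _ fun i hi =>
      Function.update_of_ne (ne_of_mem_of_not_mem hi hjS) _ _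
  rw [maxPlusLinear, hmax, ← add_sum_erase _ _ hjT, Function.update_self,
    sum_congr rfl fun k hk => by rw [Function.update_of_ne (ne_of_mem_erase hk)]]
  ring

end MaxPlusLinear

theorem stmt_19_general {n : ℕ} (t : ℕ)
    (hne : (Finset.univ.filter fun k : Fin n => (k : ℕ) < t).Nonempty)
    (a1 : ℝ) (a : Fin n → ℝ)
    (g : (Fin n → ℝ) → ℝ)
    (hg : ∀ w : Fin n → ℝ,
      g w = a1 * (Finset.univ.filter fun k : Fin n => (k : ℕ) < t).sup' hne w +
        ∑ j ∈ Finset.univ.filter fun j : Fin n => t ≤ (j : ℕ), a j * w j)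
    (A : Fin n → ℝ)
    (hA : ∀ i : Fin n, A i =
      if (i : ℕ) < t then
        (1 / (t : ℝ)) * ∫ s in (0:ℝ)..1,
          deriv (fun u : ℝ => g fun k : Fin n => if (k : ℕ) < t then u else s) s
      else
        ∫ s in (0:ℝ)..1,
          deriv (fun u : ℝ => g (Function.update (fun _ : Fin n => s) i u)) s) :
    (∀ i : Fin n, (i : ℕ) < t → A i = a1 / t) ∧
      (∀ j : Fin n, t ≤ (j : ℕ) → A j = a j) ∧
      (∀ i j : Fin n, (i : ℕ) < t → t ≤ (j : ℕ) → a1 / t < a j → A i < A j) := by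
  obtain rfl : g = maxPlusLinear _ hne _ a1 a := funext hg
  have hmax : ∀ i : Fin n, (i : ℕ) < t → A i = a1 / t := by
    intro i hi
    rw [hA i, if_pos hi, intervalIntegral_deriv_of_affine ?diagonal]
    case diagonal =>
      exact fun s u => maxPlusLinear_of_eqOn hne a1 a (fun k hk => if_pos (mem_filter.1 hk).2)
        fun k hk => if_neg (not_lt.2 (mem_filter.1 hk).2)
    ring
  have hlin : ∀ j : Fin n, t ≤ (j : ℕ) → A j = a j := by
    intro j hj
    rw [hA j, if_neg (not_lt.2 hj), intervalIntegral_deriv_of_affine ?axis]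
    case axis => exact maxPlusLinear_update_const hne a1 a (by simpa using hj) (by simpa using hj)
    ring
  refine ⟨hmax, hlin, fun i j hi hj hlt => ?_⟩
  rwa [hmax i hi, hlin j hj]

/-- Feature replication splits attribution: for
`g(w) = a₁·max{w₁,…,w_t} + ∑_{j>t} a_j w_j` with `a₁ > 0`, integrated
gradients with baseline `0` and input `𝟏` (interpreting the derivative of the
max symmetrically along the diagonal, so that the `t` redundant copies share
the attribution of the max term equally) assigns each of the first `t`
coordinates attribution `a₁/t` and each coordinate `j > t` attribution `a_j`.
In particular, if `a₁/t < a_j` for some `j > t`, each redundant copy of the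
strongest feature is out-ranked by feature `j`. -/
theorem stmt_19 {n : ℕ} (t : ℕ) (ht : 1 ≤ t) (htn : t ≤ n)
    (hne : (Finset.univ.filter fun k : Fin n => (k : ℕ) < t).Nonempty)
    (a1 : ℝ) (ha1 : 0 < a1) (a : Fin n → ℝ)
    (g : (Fin n → ℝ) → ℝ)
    (hg : ∀ w : Fin n → ℝ,
      g w = a1 * (Finset.univ.filter fun k : Fin n => (k : ℕ) < t).sup' hne w +
        ∑ j ∈ Finset.univ.filter fun j : Fin n => t ≤ (j : ℕ), a j * w j)
    (A : Fin n → ℝ)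
    (hA : ∀ i : Fin n, A i =
      if (i : ℕ) < t then
        (1 / (t : ℝ)) * ∫ s in (0:ℝ)..1,
          deriv (fun u : ℝ => g fun k : Fin n => if (k : ℕ) < t then u else s) s
      else
        ∫ s in (0:ℝ)..1,
          deriv (fun u : ℝ => g (Function.update (fun _ : Fin n => s) i u)) s) :
    (∀ i : Fin n, (i : ℕ) < t → A i = a1 / t) ∧
      (∀ j : Fin n, t ≤ (j : ℕ) → A j = a j) ∧
      (∀ i j : Fin n, (i : ℕ) < t → t ≤ (j : ℕ) → a1 / t < a j → A i < A j) :=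
  stmt_19_general t hne a1 a g hg A hA
end
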